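/- For every positive integer p, the p×p Hankel determinant of the moments of the standard Gaussian weight equals Π_{j=0}^{p−1} j!; that is, det_{0≤i,j<p}( (1/√(2π)) ∫_ℝ x^{i+j} e^{−x²/2} dx ) = Π_{j=0}^{p−1} j!. -/

import Mathlib

/-!
Let `L P = (2π)^{-1/2} ∫ P(x) e^{-x²/2} dx`, so that the matrix is the Hankel matrix
`(L(X^{i+j}))`. Multiplying it on the right by the transpose of the unitriangular coefficient
matrix of the monic Hermite polynomials `He_j` gives `(L(X^i He_j))` without changing the
determinant. By Rodrigues' formula `He_j(x) e^{-x²/2} = (-1)^j (d/dx)^j e^{-x²/2}` and `j`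
integrations by parts, `L(P He_j) = L(P^{(j)})`, so this matrix is lower triangular with
diagonal entries `L(i!) = i!`.
-/

open MeasureTheory Polynomial Real Nat

section Hankel

variable {R : Type*} [CommRing R]

theorem sum_apply_X_pow_add_mul_coeff (L : R[X] →ₗ[R] R) (q : R[X]) (i : ℕ) {n : ℕ}
    (hq : q.natDegree < n) :
    ∑ k ∈ Finset.range n, L (X ^ (i + k)) * q.coeff k = L (X ^ i * q) := by
  conv_rhs => rw [q.as_sum_range' n hq]
  rw [Finset.mul_sum, map_sum]
  refine Finset.sum_congr rfl fun k _ => ?_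
  rw [← smul_X_eq_monomial, mul_smul_comm, map_smul, pow_add, smul_eq_mul, mul_comm]

noncomputable def hankelMatrix (L : R[X] →ₗ[R] R) (p : ℕ) : Matrix (Fin p) (Fin p) R :=
  .of fun i j => L (X ^ ((i : ℕ) + j))

theorem det_hankelMatrix_eq_prod_of_orthogonal (L : R[X] →ₗ[R] R) (q : ℕ → R[X])
    (hmonic : ∀ j, (q j).Monic) (hdeg : ∀ j, (q j).natDegree = j)
    (horth : ∀ i j, i < j → L (X ^ i * q j) = 0) (p : ℕ) :
    (hankelMatrix L p).det = ∏ i : Fin p, L (X ^ (i : ℕ) * q i) := by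
  set C : Matrix (Fin p) (Fin p) R := .of fun j k => (q j).coeff k
  set N : Matrix (Fin p) (Fin p) R := .of fun i j => L (X ^ (i : ℕ) * q j)
  have hC : C.det = 1 := by
    rw [C.det_of_isLowerTriangular fun j k hjk => coeff_eq_zero_of_natDegree_lt
      ((hdeg j).trans_lt hjk)]
    exact Finset.prod_eq_one fun j _ => by simpa [C, hdeg] using (hmonic j).coeff_natDegree
  have hN : N.det = ∏ i : Fin p, L (X ^ (i : ℕ) * q i) :=
    N.det_of_isLowerTriangular fun i j hij => horth i j hij
  have hMC : hankelMatrix L p * C.transpose = N := by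
    ext i j
    simp only [hankelMatrix, Matrix.mul_apply, Matrix.of_apply, Matrix.transpose_apply, C, N]
    rw [Fin.sum_univ_eq_sum_range (fun k => L (X ^ ((i : ℕ) + k)) * (q j).coeff k)]
    exact sum_apply_X_pow_add_mul_coeff L (q j) i ((hdeg j).trans_lt j.isLt)
  rw [← hN, ← hMC, Matrix.det_mul, Matrix.det_transpose, hC, mul_one]

end Hankel

noncomputable def gaussianWeight (x : ℝ) : ℝ := exp (-(x ^ 2 / 2))

theorem integrable_eval_mul_gaussianWeight (P : ℝ[X]) :
    Integrable fun x => P.eval x * gaussianWeight x := by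
  induction P using Polynomial.induction_on' with
  | add P Q hP hQ =>
    simp only [eval_add, add_mul]
    exact hP.add hQ
  | monomial n a =>
    have h := (integrable_rpow_mul_exp_neg_mul_sq (b := 1 / 2) (by norm_num)
      (s := n) (by linarith [n.cast_nonneg (α := ℝ)])).const_mul a
    refine h.congr (.of_forall fun x => ?_)
    simp only [eval_monomial, rpow_natCast, gaussianWeight]
    ring_nf

theorem integral_gaussianWeight : ∫ x, gaussianWeight x = √(2 * π) := by
  simpa [gaussianWeight, div_eq_inv_mul, mul_comm] using integral_gaussian (1 / 2)

theorem iterate_deriv_gaussianWeight (j : ℕ) (x : ℝ) :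
    deriv^[j] gaussianWeight x =
      (-1) ^ j * ((hermite j).map (algebraMap ℤ ℝ)).eval x * gaussianWeight x := by
  rw [eval_map_algebraMap]
  exact deriv_gaussian_eq_hermite_mul_gaussian j x

theorem hasDerivAt_iterate_deriv_gaussianWeight (j : ℕ) (x : ℝ) :
    HasDerivAt (deriv^[j] gaussianWeight) (deriv^[j + 1] gaussianWeight x) x := by
  have hdiff : Differentiable ℝ (deriv^[j] gaussianWeight) := by
    rw [funext (iterate_deriv_gaussianWeight j)]
    exact ((differentiable_const _).mul (Polynomial.differentiable _)).mul
      (by unfold gaussianWeight; fun_prop)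
  rw [Function.iterate_succ_apply']
  exact (hdiff x).hasDerivAt

theorem integrable_eval_mul_iterate_deriv_gaussianWeight (P : ℝ[X]) (j : ℕ) :
    Integrable fun x => P.eval x * deriv^[j] gaussianWeight x := by
  refine (integrable_eval_mul_gaussianWeight
    (P * (C ((-1) ^ j) * (hermite j).map (algebraMap ℤ ℝ)))).congr (.of_forall fun x => ?_)
  simp only [iterate_deriv_gaussianWeight, eval_mul, eval_C]
  ring

theorem integral_eval_mul_iterate_deriv_gaussianWeight (P : ℝ[X]) (j : ℕ) :
    ∫ x, P.eval x * deriv^[j] gaussianWeight x =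
      (-1) ^ j * ∫ x, (derivative^[j] P).eval x * gaussianWeight x := by
  induction j generalizing P with
  | zero => simp
  | succ j ih =>
    have hparts : ∫ x, P.eval x * deriv^[j + 1] gaussianWeight x =
        -∫ x, (derivative P).eval x * deriv^[j] gaussianWeight x :=
      integral_mul_deriv_eq_deriv_mul_of_integrable (fun x _ => P.hasDerivAt x)
        (fun x _ => hasDerivAt_iterate_deriv_gaussianWeight j x)
        (integrable_eval_mul_iterate_deriv_gaussianWeight P (j + 1))
        (integrable_eval_mul_iterate_deriv_gaussianWeight (derivative P) j)
        (integrable_eval_mul_iterate_deriv_gaussianWeight P j)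
    rw [hparts, ih, ← Function.iterate_succ_apply, pow_succ]
    ring

noncomputable def gaussianExpectation : ℝ[X] →ₗ[ℝ] ℝ where
  toFun P := (√(2 * π))⁻¹ * ∫ x, P.eval x * gaussianWeight x
  map_add' P Q := by
    simp only [eval_add, add_mul, integral_add (integrable_eval_mul_gaussianWeight P)
      (integrable_eval_mul_gaussianWeight Q), mul_add]
  map_smul' c P := by
    simp only [eval_smul, smul_eq_mul, mul_assoc, integral_const_mul, RingHom.id_apply]
    ring

theorem gaussianExpectation_apply (P : ℝ[X]) :
    gaussianExpectation P = (√(2 * π))⁻¹ * ∫ x, P.eval x * gaussianWeight x := rfl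

theorem gaussianExpectation_mul_hermite (P : ℝ[X]) (j : ℕ) :
    gaussianExpectation (P * (hermite j).map (algebraMap ℤ ℝ)) =
      gaussianExpectation (derivative^[j] P) := by
  have hsign : (-1 : ℝ) ^ j * (-1) ^ j = 1 := by rw [← mul_pow]; norm_num
  have hrodrigues (x : ℝ) : (P * (hermite j).map (algebraMap ℤ ℝ)).eval x * gaussianWeight x =
      (-1) ^ j * (P.eval x * deriv^[j] gaussianWeight x) := by
    rw [iterate_deriv_gaussianWeight, eval_mul]
    linear_combination -(P.eval x * ((hermite j).map (algebraMap ℤ ℝ)).eval x *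
      gaussianWeight x) * hsign
  simp only [gaussianExpectation_apply, hrodrigues]
  rw [integral_const_mul, integral_eval_mul_iterate_deriv_gaussianWeight,
    ← mul_assoc ((-1 : ℝ) ^ j), hsign, one_mul]

theorem gaussianExpectation_C (c : ℝ) : gaussianExpectation (C c) = c := by
  have : √(2 * π) ≠ 0 := by positivity
  rw [gaussianExpectation_apply]
  simp only [eval_C, integral_const_mul, integral_gaussianWeight]
  field_simp

theorem gaussianExpectation_X_pow_mul_hermite_of_lt {i j : ℕ} (hij : i < j) :
    gaussianExpectation (X ^ i * (hermite j).map (algebraMap ℤ ℝ)) = 0 := by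
  rw [gaussianExpectation_mul_hermite, iterate_derivative_eq_zero (by simpa using hij), map_zero]

theorem gaussianExpectation_X_pow_mul_hermite_self (i : ℕ) :
    gaussianExpectation (X ^ i * (hermite i).map (algebraMap ℤ ℝ)) = i ! := by
  rw [gaussianExpectation_mul_hermite, iterate_derivative_X_pow_eq_C_mul, Nat.descFactorial_self,
    Nat.sub_self, pow_zero, mul_one, gaussianExpectation_C]

theorem stmt9 (p : ℕ) :
    Matrix.det (Matrix.of fun i j : Fin p =>
        (Real.sqrt (2*Real.pi))⁻¹ * ∫ x : ℝ, x^((i : ℕ)+(j : ℕ)) * Real.exp (-x^2/2)) =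
      ∏ j ∈ Finset.range p, (j.factorial : ℝ) := by
  have hentries : (Matrix.of fun i j : Fin p =>
      (√(2 * π))⁻¹ * ∫ x : ℝ, x ^ ((i : ℕ) + (j : ℕ)) * exp (-x ^ 2 / 2)) =
      hankelMatrix gaussianExpectation p := by
    ext i j
    simp only [hankelMatrix, Matrix.of_apply, gaussianExpectation_apply, eval_pow, eval_X,
      gaussianWeight, neg_div]
  rw [hentries, det_hankelMatrix_eq_prod_of_orthogonal gaussianExpectation
      (fun j => (hermite j).map (algebraMap ℤ ℝ)) (fun j => (hermite_monic j).map _)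
      (fun j => ((hermite_monic j).natDegree_map _).trans natDegree_hermite)
      (fun _ _ => gaussianExpectation_X_pow_mul_hermite_of_lt) p]
  simp only [gaussianExpectation_X_pow_mul_hermite_self]
  exact Fin.prod_univ_eq_prod_range (fun i => (i ! : ℝ)) p
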